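/- arXiv:1505.07547 — 2 statements merged into one kernel-verified Lean document; each statement's English description precedes it below -/
import Mathlib

section
/- Let F be a field, let S ⊆ F be a finite set, let c be a positive integer, and let P ∈ F[X_1,...,X_m] be a nonzero polynomial of total degree at most d. Let z ∈ F^m and let y_1,...,y_m ∈ F^m be linearly independent over F. Then the number of tuples α = (α_1,...,α_m) ∈ S^m such that P vanishes with multiplicity at least c at the point z + α_1·y_1 + ... + α_m·y_m satisfies c·#{α ∈ S^m : mult(P, z + Σ_j α_j y_j) ≥ c} ≤ d·|S|^{m-1}. -/
/-- The Hasse derivative of a multivariate polynomial `P` with respect to the index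
vector `i : Fin m → ℕ`: the coefficient of `Z^i` in `P(X + Z)`. -/
noncomputable def mvHasseDeriv {F : Type*} [CommSemiring F] {m : ℕ}
    (i : Fin m → ℕ) (P : MvPolynomial (Fin m) F) : MvPolynomial (Fin m) F :=
  MvPolynomial.coeff (Finsupp.equivFunOnFinite.symm i)
    (MvPolynomial.eval₂ (MvPolynomial.C.comp MvPolynomial.C)
      (fun k => MvPolynomial.C (MvPolynomial.X k) + MvPolynomial.X k) P)

/-- The multiplicity of `P` at a point `a`: the largest `M` (possibly `⊤`) such that
all Hasse derivatives of `P` of weight `< M` vanish at `a`. -/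
noncomputable def mvMult {F : Type*} [CommSemiring F] {m : ℕ}
    (P : MvPolynomial (Fin m) F) (a : Fin m → F) : ℕ∞ :=
  sSup {M : ℕ∞ | ∀ i : Fin m → ℕ, ((∑ k, i k : ℕ) : ℕ∞) < M →
    MvPolynomial.eval a (mvHasseDeriv i P) = 0}

/-!
Write `ord_a P` for the least total degree of a monomial of `P(X + a)`. The Hasse derivatives of
`P` at `a` are the coefficients of `P(X + a)`, so `mult(P, a) ≥ c` says that `P(X + a)` lies in
`(X_1, …, X_m)^c`, i.e. `ord_a P ≥ c`. The polynomial `Q(X) = P(z + ∑ X_j y_j)` is nonzero because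
the substitution is invertible, has degree at most `d`, and satisfies `ord_α Q ≥ c` whenever
`mult(P, z + ∑ α_j y_j) ≥ c`, because the linear part of the substitution maps `(X_1, …, X_m)^c`
into itself. So it suffices to show `|S| ⬝ ∑_{α ∈ S^m} ord_α Q ≤ deg Q ⬝ |S|^m`.

This goes by induction on `m`. Write `Q = ∑_{j ≤ t} Q_j(X') X_0^j` with `Q_t ≠ 0` and fix `β`.
If `X'^s` is a monomial of least degree of `Q_t(X' + β)`, the coefficient `U` of `X'^s` in
`Q(X_0, X' + β)` is a nonzero univariate polynomial of degree `t`, and `X_0^r X'^s` with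
`r = mult(U, b)` occurs in `Q(X + (b, β))`, so `ord_{(b, β)} Q ≤ r + |s|`. Summing over `b ∈ S`
gives `∑_b ord_{(b, β)} Q ≤ t + |S| ⬝ ord_β Q_t`, and the induction hypothesis applies to `Q_t`,
whose degree is at most `deg Q - t`.
-/

theorem Finsupp.degree_cons {m : ℕ} (r : ℕ) (s : Fin m →₀ ℕ) :
    (Finsupp.cons r s).degree = r + s.degree := by
  simp [Finsupp.degree_eq_sum, Fin.sum_univ_succ]

theorem Fin.sum_piFinset_const_succ {α M : Type*} [AddCommMonoid M] {n : ℕ} (S : Finset α)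
    (f : (Fin (n + 1) → α) → M) :
    ∑ x ∈ Fintype.piFinset (fun _ => S), f x =
      ∑ b ∈ S, ∑ β ∈ Fintype.piFinset (fun _ => S), f (Fin.cons b β) := by
  rw [← Finset.sum_product']
  exact Finset.sum_equiv (Fin.consEquiv fun _ => α).symm
    (fun x => by simp [Fin.forall_fin_succ, Fin.tail]) (fun x _ => by simp)

theorem Polynomial.sum_rootMultiplicity_le_natDegree {R : Type*} [CommRing R] [IsDomain R]
    (p : Polynomial R) (S : Finset R) :
    ∑ b ∈ S, p.rootMultiplicity b ≤ p.natDegree := by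
  classical
  calc ∑ b ∈ S, p.rootMultiplicity b
      ≤ ∑ b ∈ S ∪ p.roots.toFinset, p.roots.count b := by
        simp only [Polynomial.count_roots]
        exact Finset.sum_le_sum_of_subset Finset.subset_union_left
    _ = Multiset.card p.roots := Multiset.sum_count_eq_card fun b hb => by simp [hb]
    _ ≤ p.natDegree := Polynomial.card_roots' p

namespace Polynomial

variable {σ R : Type*} [CommSemiring R]

noncomputable def mvCoeff (s : σ →₀ ℕ) (Q : (MvPolynomial σ R)[X]) : R[X] :=
  Q.sum fun j q => monomial j (MvPolynomial.coeff s q)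

@[simp]
theorem coeff_mvCoeff (s : σ →₀ ℕ) (Q : (MvPolynomial σ R)[X]) (j : ℕ) :
    (mvCoeff s Q).coeff j = MvPolynomial.coeff s (Q.coeff j) := by
  rw [mvCoeff, coeff_sum, sum_def, Finset.sum_eq_single j] <;> simp +contextual [coeff_monomial]

theorem mvCoeff_add (s : σ →₀ ℕ) (Q Q' : (MvPolynomial σ R)[X]) :
    mvCoeff s (Q + Q') = mvCoeff s Q + mvCoeff s Q' := by
  ext j
  simp

theorem mvCoeff_monomial (s : σ →₀ ℕ) (j : ℕ) (q : MvPolynomial σ R) :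
    mvCoeff s (monomial j q) = monomial j (MvPolynomial.coeff s q) := by
  ext n
  simp only [coeff_mvCoeff, coeff_monomial]
  split_ifs <;> simp

theorem coeff_taylor_mvCoeff (s : σ →₀ ℕ) (b : R) (Q : (MvPolynomial σ R)[X]) (r : ℕ) :
    (taylor b (mvCoeff s Q)).coeff r =
      MvPolynomial.coeff s ((taylor (MvPolynomial.C b) Q).coeff r) := by
  induction Q using Polynomial.induction_on' with
  | add p q hp hq => simp only [mvCoeff_add, map_add, coeff_add, hp, hq, MvPolynomial.coeff_add]
  | monomial j q =>
    rw [mvCoeff_monomial, taylor_monomial, taylor_monomial, coeff_C_mul, coeff_C_mul,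
      coeff_X_add_C_pow, coeff_X_add_C_pow, ← map_pow, ← map_natCast MvPolynomial.C, ← map_mul,
      mul_comm q, MvPolynomial.coeff_C_mul, mul_comm]

end Polynomial

namespace MvPolynomial

section Substitution

variable {σ τ R : Type*} [CommSemiring R]

noncomputable def shift (a : σ → R) : MvPolynomial σ R →ₐ[R] MvPolynomial σ R :=
  aeval fun i => X i + C (a i)

@[simp]
theorem shift_X (a : σ → R) (i : σ) : shift a (X i) = X i + C (a i) :=
  aeval_X _ i

theorem shift_shift (a b : σ → R) (P : MvPolynomial σ R) :
    shift b (shift a P) = shift (a + b) P := by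
  rw [← AlgHom.comp_apply]
  congr 1
  ext i
  simp [add_assoc, add_comm (C (b i))]

theorem shift_zero : shift (0 : σ → R) = AlgHom.id R _ := by
  ext i
  simp

theorem finSuccEquiv_shift_cons {m : ℕ} (b : R) (β : Fin m → R)
    (P : MvPolynomial (Fin (m + 1)) R) :
    finSuccEquiv R m (shift (Fin.cons b β) P) =
      Polynomial.taylor (C b) (Polynomial.map (shift β).toRingHom (finSuccEquiv R m P)) := by
  have h : ((finSuccEquiv R m).toAlgHom.comp (shift (Fin.cons b β))) =
      ((Polynomial.taylorAlgHom (C b)).restrictScalars R).comp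
        ((Polynomial.mapAlgHom (shift β)).comp (finSuccEquiv R m).toAlgHom) := by
    refine algHom_ext fun k => ?_
    cases k using Fin.cases <;> simp [finSuccEquiv_apply]
  exact congrArg (fun f => f P) (congrArg DFunLike.coe h)

theorem totalDegree_aeval_le {g : σ → MvPolynomial τ R} (hg : ∀ i, (g i).totalDegree ≤ 1)
    (P : MvPolynomial σ R) : (aeval g P).totalDegree ≤ P.totalDegree := by
  conv_lhs => rw [P.as_sum, map_sum]
  refine (totalDegree_finsetSum _ _).trans (Finset.sup_le fun s hs => ?_)
  rw [aeval_monomial, ← C_eq_algebraMap]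
  refine (totalDegree_mul _ _).trans ?_
  rw [totalDegree_C, zero_add]
  refine (totalDegree_finsetProd _ _).trans ((Finset.sum_le_sum fun i _ =>
    (totalDegree_pow (g i) (s i)).trans (Nat.mul_le_mul_left _ (hg i))).trans ?_)
  simp only [mul_one]
  exact le_totalDegree hs

theorem totalDegree_X_le (i : σ) : (X i : MvPolynomial σ R).totalDegree ≤ 1 :=
  (totalDegree_monomial_le (Finsupp.single i 1) 1).trans (by simp)

theorem totalDegree_shift_le (a : σ → R) (P : MvPolynomial σ R) :
    (shift a P).totalDegree ≤ P.totalDegree :=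
  totalDegree_aeval_le (fun i => (totalDegree_add _ _).trans (by simp [totalDegree_X_le])) P

variable [Fintype τ]

noncomputable def linearSubst (M : Matrix τ σ R) : MvPolynomial σ R →ₐ[R] MvPolynomial τ R :=
  aeval fun k => ∑ j, M j k • X j

@[simp]
theorem linearSubst_X (M : Matrix τ σ R) (k : σ) : linearSubst M (X k) = ∑ j, M j k • X j :=
  aeval_X _ k

theorem totalDegree_linearSubst_le (M : Matrix τ σ R) (P : MvPolynomial σ R) :
    (linearSubst M P).totalDegree ≤ P.totalDegree :=
  totalDegree_aeval_le (fun _ => (totalDegree_finsetSum _ _).trans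
    (Finset.sup_le fun j _ => (totalDegree_smul_le _ _).trans (totalDegree_X_le j))) P

theorem linearSubst_comp_linearSubst {υ : Type*} [Fintype υ] (A : Matrix υ τ R)
    (B : Matrix τ σ R) : (linearSubst A).comp (linearSubst B) = linearSubst (A * B) := by
  refine algHom_ext fun k => ?_
  simp only [AlgHom.comp_apply, linearSubst_X, map_sum, map_smul, Finset.smul_sum, smul_smul,
    Matrix.mul_apply, Finset.sum_smul]
  rw [Finset.sum_comm]
  simp_rw [mul_comm]

theorem linearSubst_one [DecidableEq τ] : linearSubst (1 : Matrix τ τ R) = AlgHom.id R _ := by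
  refine algHom_ext fun k => ?_
  simp [Matrix.one_apply]

theorem linearSubst_injective [DecidableEq τ] {M : Matrix τ τ R} (hM : IsUnit M) :
    Function.Injective (linearSubst M) := by
  obtain ⟨u, rfl⟩ := hM
  refine Function.LeftInverse.injective (g := linearSubst ↑u⁻¹) fun P => ?_
  rw [← AlgHom.comp_apply, linearSubst_comp_linearSubst, Units.inv_mul, linearSubst_one,
    AlgHom.id_apply]

theorem shift_comp_linearSubst (M : Matrix τ σ R) (a : τ → R) :
    (shift a).comp (linearSubst M) = (linearSubst M).comp (shift (Matrix.vecMul a M)) := by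
  refine algHom_ext fun k => ?_
  simp only [AlgHom.comp_apply, linearSubst_X, shift_X, map_add, map_sum, map_smul, algHom_C,
    smul_add, Finset.sum_add_distrib]
  simp only [Matrix.vecMul, dotProduct, map_sum, smul_eq_C_mul, ← C_mul, algebraMap_eq, mul_comm]

theorem linearSubst_mem_pow_idealOfVars (M : Matrix τ σ R) {n : ℕ} {P : MvPolynomial σ R}
    (hP : P ∈ idealOfVars σ R ^ n) : linearSubst M P ∈ idealOfVars τ R ^ n := by
  have hX : (idealOfVars σ R).map (linearSubst M) ≤ idealOfVars τ R := by
    rw [Ideal.map_span, Ideal.span_le]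
    rintro _ ⟨_, ⟨k, rfl⟩, rfl⟩
    rw [SetLike.mem_coe, linearSubst_X]
    exact Ideal.sum_mem _ fun j _ => Submodule.smul_of_tower_mem _ _ (Ideal.subset_span ⟨j, rfl⟩)
  exact Ideal.pow_right_mono hX n (Ideal.map_pow (linearSubst M) _ n ▸ Ideal.mem_map_of_mem _ hP)

end Substitution

section VanishingOrder

variable {σ R : Type*} [CommRing R] {P : MvPolynomial σ R} {a : σ → R}

theorem shift_injective (a : σ → R) : Function.Injective (shift a) :=
  Function.LeftInverse.injective (g := shift (-a)) fun P => by
    rw [shift_shift, add_neg_cancel, shift_zero, AlgHom.id_apply]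

/-- For `P = 0` this is the junk value `sInf ∅ = 0`. -/
noncomputable def vanishingOrder (P : MvPolynomial σ R) (a : σ → R) : ℕ :=
  sInf (Finsupp.degree '' ((shift a P).support : Set (σ →₀ ℕ)))

theorem vanishingOrder_le_degree {s : σ →₀ ℕ} (hs : s ∈ (shift a P).support) :
    vanishingOrder P a ≤ s.degree :=
  Nat.sInf_le ⟨s, hs, rfl⟩

theorem exists_degree_eq_vanishingOrder (hP : P ≠ 0) (a : σ → R) :
    ∃ s ∈ (shift a P).support, s.degree = vanishingOrder P a := by
  have hne : ((shift a P).support : Set (σ →₀ ℕ)).Nonempty := by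
    simpa [support_eq_empty] using (shift_injective a).ne hP
  exact Nat.sInf_mem (hne.image _)

theorem le_vanishingOrder_iff (hP : P ≠ 0) {n : ℕ} :
    n ≤ vanishingOrder P a ↔ shift a P ∈ idealOfVars σ R ^ n := by
  rw [mem_pow_idealOfVars_iff]
  refine ⟨fun h s hs => h.trans (vanishingOrder_le_degree hs), fun h => ?_⟩
  obtain ⟨s, hs, hsa⟩ := exists_degree_eq_vanishingOrder hP a
  exact hsa ▸ h s hs

theorem vanishingOrder_of_isEmpty [IsEmpty σ] (P : MvPolynomial σ R) (a : σ → R) :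
    vanishingOrder P a = 0 := by
  rcases eq_or_ne P 0 with rfl | hP
  · simp [vanishingOrder]
  obtain ⟨s, -, hsa⟩ := exists_degree_eq_vanishingOrder hP a
  rw [← hsa, Subsingleton.elim s 0, map_zero]

end VanishingOrder

section HasseDeriv

variable {R : Type*} [CommSemiring R] {m : ℕ}

theorem eval_mvHasseDeriv (a : Fin m → R) (i : Fin m → ℕ) (P : MvPolynomial (Fin m) R) :
    eval a (mvHasseDeriv i P) = coeff (Finsupp.equivFunOnFinite.symm i) (shift a P) := by
  rw [mvHasseDeriv, ← coeff_map, eval₂_comp_left (map (eval a))]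
  congr 1
  rw [shift, aeval_def]
  congr 1
  · ext r; simp
  · ext k; simp [add_comm]

theorem shift_mem_pow_idealOfVars_of_le_mvMult {c : ℕ} {P : MvPolynomial (Fin m) R}
    {a : Fin m → R} (h : (c : ℕ∞) ≤ mvMult P a) :
    shift a P ∈ idealOfVars (Fin m) R ^ c := by
  rw [mem_pow_idealOfVars_iff']
  intro s hs
  obtain ⟨M, hM, hsM⟩ := lt_sSup_iff.mp ((Nat.cast_lt.mpr hs).trans_le h)
  rw [Finsupp.degree_eq_sum] at hsM
  simpa [eval_mvHasseDeriv] using hM s hsM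

end HasseDeriv

section SchwartzZippel

variable {R : Type*} [CommRing R] [IsDomain R]

open Polynomial in
theorem sum_vanishingOrder_cons_le {m : ℕ} (P : MvPolynomial (Fin (m + 1)) R) (hP : P ≠ 0)
    (S : Finset R) (β : Fin m → R) :
    ∑ b ∈ S, vanishingOrder P (Fin.cons b β) ≤
      S.card * vanishingOrder (finSuccEquiv R m P).leadingCoeff β +
        (finSuccEquiv R m P).natDegree := by
  set Q := finSuccEquiv R m P
  set μ := vanishingOrder Q.leadingCoeff β
  have hQt : Q.leadingCoeff ≠ 0 := leadingCoeff_ne_zero.mpr (EmbeddingLike.map_ne_zero_iff.2 hP)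
  obtain ⟨s, hs, hsμ⟩ := exists_degree_eq_vanishingOrder hQt β
  set U := mvCoeff s (Q.map (shift β).toRingHom)
  have hUt : U.coeff Q.natDegree ≠ 0 := by simpa [U] using hs
  have hU : U ≠ 0 := fun h => hUt (by rw [h, Polynomial.coeff_zero])
  have hUdeg : U.natDegree ≤ Q.natDegree := natDegree_le_iff_coeff_eq_zero.mpr fun j hj => by
    simp [U, coeff_eq_zero_of_natDegree_lt hj]
  have hpoint (b : R) : vanishingOrder P (Fin.cons b β) ≤ U.rootMultiplicity b + μ := by
    -- the coefficient of this monomial in `P(X + (b, β))` is the trailing coefficient of `U(X + b)`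
    have hmem : Finsupp.cons (U.rootMultiplicity b) s ∈ (shift (Fin.cons b β) P).support := by
      rw [mem_support_iff, ← finSuccEquiv_coeff_coeff, finSuccEquiv_shift_cons,
        ← coeff_taylor_mvCoeff, rootMultiplicity_eq_natTrailingDegree, ← taylor_apply]
      exact trailingCoeff_nonzero_iff_nonzero.mpr ((taylor_eq_zero b U).not.mpr hU)
    simpa [Finsupp.degree_cons, hsμ] using vanishingOrder_le_degree hmem
  calc ∑ b ∈ S, vanishingOrder P (Fin.cons b β)
      ≤ ∑ b ∈ S, (U.rootMultiplicity b + μ) := Finset.sum_le_sum fun b _ => hpoint b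
    _ = ∑ b ∈ S, U.rootMultiplicity b + S.card * μ := by
      rw [Finset.sum_add_distrib, Finset.sum_const, smul_eq_mul]
    _ ≤ Q.natDegree + S.card * μ := by
      gcongr
      exact (sum_rootMultiplicity_le_natDegree U S).trans hUdeg
    _ = S.card * μ + Q.natDegree := add_comm _ _

theorem card_mul_sum_vanishingOrder_le (S : Finset R) :
    ∀ {m : ℕ} (P : MvPolynomial (Fin m) R), P ≠ 0 →
      S.card * ∑ α ∈ Fintype.piFinset (fun _ => S), vanishingOrder P α ≤
        P.totalDegree * S.card ^ m
  | 0, _, _ => by simp [vanishingOrder_of_isEmpty]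
  | m + 1, P, hP => by
    set Q := finSuccEquiv R m P
    have hQt : Q.leadingCoeff ≠ 0 :=
      Polynomial.leadingCoeff_ne_zero.mpr (EmbeddingLike.map_ne_zero_iff.2 hP)
    have hdeg : Q.leadingCoeff.totalDegree + Q.natDegree ≤ P.totalDegree :=
      totalDegree_coeff_finSuccEquiv_add_le P Q.natDegree hQt
    have ih := card_mul_sum_vanishingOrder_le S Q.leadingCoeff hQt
    calc S.card * ∑ α ∈ Fintype.piFinset (fun _ => S), vanishingOrder P α
        = S.card * ∑ β ∈ Fintype.piFinset (fun _ => S), ∑ b ∈ S,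
            vanishingOrder P (Fin.cons b β) := by
          rw [Fin.sum_piFinset_const_succ, Finset.sum_comm]
      _ ≤ S.card * ∑ β ∈ Fintype.piFinset (fun _ => S),
            (S.card * vanishingOrder Q.leadingCoeff β + Q.natDegree) := by
          gcongr with β
          exact sum_vanishingOrder_cons_le P hP S β
      _ = S.card * (S.card * ∑ β ∈ Fintype.piFinset (fun _ => S),
              vanishingOrder Q.leadingCoeff β) + Q.natDegree * S.card ^ (m + 1) := by
          rw [Finset.sum_add_distrib, ← Finset.mul_sum, Finset.sum_const,
            Fintype.card_piFinset_const, smul_eq_mul]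
          ring
      _ ≤ S.card * (Q.leadingCoeff.totalDegree * S.card ^ m)
            + Q.natDegree * S.card ^ (m + 1) := by
          gcongr
      _ = (Q.leadingCoeff.totalDegree + Q.natDegree) * S.card ^ (m + 1) := by ring
      _ ≤ P.totalDegree * S.card ^ (m + 1) := by gcongr

theorem sum_vanishingOrder_le {m : ℕ} {P : MvPolynomial (Fin m) R} (hP : P ≠ 0) (S : Finset R) :
    ∑ α ∈ Fintype.piFinset (fun _ => S), vanishingOrder P α ≤
      P.totalDegree * S.card ^ (m - 1) := by
  rcases m with _ | m
  · simp [vanishingOrder_of_isEmpty]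
  rcases S.eq_empty_or_nonempty with rfl | hS
  · simp
  refine Nat.le_of_mul_le_mul_left ?_ hS.card_pos
  calc S.card * ∑ α ∈ Fintype.piFinset (fun _ => S), vanishingOrder P α
      ≤ P.totalDegree * S.card ^ (m + 1) := card_mul_sum_vanishingOrder_le S P hP
    _ = S.card * (P.totalDegree * S.card ^ (m + 1 - 1)) := by
      rw [Nat.add_sub_cancel, pow_succ]
      ring

theorem mul_card_le_vanishingOrder_le {m : ℕ} {P : MvPolynomial (Fin m) R} (hP : P ≠ 0)
    (S : Finset R) (c : ℕ) :
    c * {α ∈ Fintype.piFinset (fun _ : Fin m => S) | c ≤ vanishingOrder P α}.card ≤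
      P.totalDegree * S.card ^ (m - 1) :=
  calc c * {α ∈ Fintype.piFinset (fun _ : Fin m => S) | c ≤ vanishingOrder P α}.card
      ≤ ∑ α ∈ Fintype.piFinset (fun _ : Fin m => S) with c ≤ vanishingOrder P α,
          vanishingOrder P α := by
        rw [mul_comm, ← smul_eq_mul]
        exact Finset.card_nsmul_le_sum _ _ _ fun α hα => (Finset.mem_filter.mp hα).2
    _ ≤ ∑ α ∈ Fintype.piFinset (fun _ : Fin m => S), vanishingOrder P α :=
        Finset.sum_le_sum_of_subset (Finset.filter_subset _ _)
    _ ≤ P.totalDegree * S.card ^ (m - 1) := sum_vanishingOrder_le hP S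

end SchwartzZippel

end MvPolynomial

open MvPolynomial in
theorem mult_schwartz_zippel_affine_general {F : Type*} [Field F] {m : ℕ} (S : Finset F) (d c : ℕ)
    (P : MvPolynomial (Fin m) F) (hP : P ≠ 0) (hdeg : P.totalDegree ≤ d)
    (z : Fin m → F) (y : Fin m → Fin m → F) (hy : LinearIndependent F y) :
    c * Nat.card {α : Fin m → F //
        (∀ k, α k ∈ S) ∧ (c : ℕ∞) ≤ mvMult P (z + ∑ j, α j • y j)}
      ≤ d * S.card ^ (m - 1) := by
  set Q := linearSubst (Matrix.of y) (shift z P)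
  have hQ : Q ≠ 0 :=
    (map_ne_zero_iff _ (linearSubst_injective (Matrix.linearIndependent_rows_iff_isUnit.mp hy))).mpr
      ((map_ne_zero_iff _ (shift_injective z)).mpr hP)
  have hvanish (α : Fin m → F) (hα : (c : ℕ∞) ≤ mvMult P (z + ∑ j, α j • y j)) :
      c ≤ vanishingOrder Q α := by
    rw [le_vanishingOrder_iff hQ, ← AlgHom.comp_apply, shift_comp_linearSubst, AlgHom.comp_apply,
      shift_shift, Matrix.vecMul_eq_sum]
    exact linearSubst_mem_pow_idealOfVars _ (shift_mem_pow_idealOfVars_of_le_mvMult hα)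
  calc c * Nat.card {α : Fin m → F // (∀ k, α k ∈ S) ∧ (c : ℕ∞) ≤ mvMult P (z + ∑ j, α j • y j)}
      ≤ c * {α ∈ Fintype.piFinset (fun _ : Fin m => S) | c ≤ vanishingOrder Q α}.card := by
        gcongr
        rw [← Nat.card_eq_finsetCard]
        exact Nat.card_le_card_of_injective
          (fun α => ⟨α.1, by simpa using ⟨α.2.1, hvanish α.1 α.2.2⟩⟩)
          fun α β h => Subtype.ext (congrArg Subtype.val h :)
    _ ≤ Q.totalDegree * S.card ^ (m - 1) := mul_card_le_vanishingOrder_le hQ S c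
    _ ≤ d * S.card ^ (m - 1) := by
        gcongr
        exact (totalDegree_linearSubst_le _ _).trans ((totalDegree_shift_le z P).trans hdeg)

/-- **Multiplicity Schwartz–Zippel along an injective affine map.**
If `P` is a nonzero polynomial of total degree at most `d` in `m` variables over a field `F`,
`S ⊆ F` is finite, `c > 0`, `z ∈ F^m` and `y_1, …, y_m ∈ F^m` are linearly independent, then
`c ⬝ #{α ∈ S^m : mult(P, z + ∑_j α_j y_j) ≥ c} ≤ d ⬝ |S|^(m-1)`. -/
theorem mult_schwartz_zippel_affine {F : Type*} [Field F] {m : ℕ} (S : Finset F) (d c : ℕ)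
    (hc : 0 < c) (P : MvPolynomial (Fin m) F) (hP : P ≠ 0) (hdeg : P.totalDegree ≤ d)
    (z : Fin m → F) (y : Fin m → Fin m → F) (hy : LinearIndependent F y) :
    c * Nat.card {α : Fin m → F //
        (∀ k, α k ∈ S) ∧ (c : ℕ∞) ≤ mvMult P (z + ∑ j, α j • y j)}
      ≤ d * S.card ^ (m - 1) :=
  mult_schwartz_zippel_affine_general S d c P hP hdeg z y hy
end

section
/- Let q be a prime power, let F_q ⊆ F_{q^m} be finite fields, and let 𝔞 = (a_1,...,a_m) ∈ F_{q^m}^m be such that a_1,...,a_m form a basis of F_{q^m} over F_q. Let γ_𝔞(T) = (γ_1(T),...,γ_m(T)) where γ_k(T) = Σ_{i=0}^{m−1} a_k^{q^i}·T^{q^i} ∈ F_{q^m}[T], so that γ_k(t) = Tr_{F_{q^m}/F_q}(a_k·t) for every t ∈ F_{q^m}. Let P ∈ F_q[X_1,...,X_m], let l be a vector of nonnegative integers, and let Q_l(T) = P^{(l)}(γ_1(T),...,γ_m(T)) ∈ F_{q^m}[T]. Then for every t ∈ F_{q^m} and every nonnegative integer j < q, the j-th Hasse derivative of Q_l satisfies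 Q_l^{(j)}(t) = Σ_{i : wt(i) = j} binom(i+l, l) · P^{(i+l)}(γ_𝔞(t)) · 𝔞^i, where 𝔞^i = ∏_k a_k^{i_k}. -/
/-!
Each `γ_k` is additive (its exponents are powers of `q`, and `x ↦ x^q` is additive in
characteristic `p`), so `Q_l(t + T) = P^{(l)}(γ(t) + γ(T))`, which the multivariate Taylor formula
expands as `∑_i (P^{(l)})^{(i)}(γ(t)) γ(T)^i`. Modulo `T^q` we have `γ(T) ≡ 𝔞 T`, so for `j < q` the
coefficient of `T^j` is `∑_{wt(i) = j} (P^{(l)})^{(i)}(γ(t)) 𝔞^i`; finally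
`(P^{(l)})^{(i)} = binom(i+l, l) P^{(i+l)}`.
-/

section TraceCurve

open Polynomial

theorem FiniteField.add_pow_card_pow {F R : Type*} [Field F] [Fintype F] [CommRing R]
    [Algebra F R] (x y : R) (e : ℕ) :
    (x + y) ^ Fintype.card F ^ e = x ^ Fintype.card F ^ e + y ^ Fintype.card F ^ e := by
  have := map_add (FiniteField.frobeniusAlgHom F R ^ e) x y
  simpa only [AlgHom.coe_pow, FiniteField.coe_frobeniusAlgHom, pow_iterate] using this

theorem Polynomial.coeff_eq_of_X_pow_dvd_sub {K : Type*} [CommRing K] {f g : K[X]} {q j : ℕ}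
    (h : X ^ q ∣ f - g) (hj : j < q) : f.coeff j = g.coeff j := by
  rw [← sub_eq_zero, ← coeff_sub]
  exact X_pow_dvd_iff.mp h j hj

/-- For `K = F_{q^m}` this is the curve `t ↦ Tr_{K/F_q}(c t)`. -/
noncomputable def traceCurve {K : Type*} [CommSemiring K] (q m : ℕ) (c : K) : K[X] :=
  ∑ e ∈ Finset.range m, C (c ^ q ^ e) * X ^ q ^ e

theorem taylor_traceCurve {F K : Type*} [Field F] [Fintype F] [CommRing K] [Algebra F K]
    (m : ℕ) (c t : K) :
    taylor t (traceCurve (Fintype.card F) m c)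
      = C ((traceCurve (Fintype.card F) m c).eval t) + traceCurve (Fintype.card F) m c := by
  simp only [taylor_apply, traceCurve, mul_comp, C_comp, pow_comp, X_comp,
    FiniteField.add_pow_card_pow (F := F), eval_finsetSum, eval_mul, eval_C, eval_pow, eval_X,
    map_sum, ← Finset.sum_add_distrib]
  refine Finset.sum_congr rfl fun e _ => ?_
  rw [C_mul, C_pow, C_pow]
  ring

theorem X_pow_dvd_traceCurve_sub {K : Type*} [CommRing K] (q : ℕ) {m : ℕ} (hm : 0 < m) (c : K) :
    X ^ q ∣ traceCurve q m c - C c * X := by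
  obtain ⟨m, rfl⟩ := Nat.exists_eq_add_of_lt hm
  rw [traceCurve, zero_add, Finset.sum_range_succ', pow_zero, pow_one, pow_one,
    add_sub_cancel_right]
  exact Finset.dvd_sum fun e _ =>
    dvd_mul_of_dvd_right (pow_dvd_pow X (Nat.le_self_pow e.succ_ne_zero q)) _

end TraceCurve

namespace MvPolynomial

open Finset

variable {σ R : Type*} [CommSemiring R]

/-- `mvTaylor P = P(X + Z)`, a polynomial in the variables `Z` with coefficients in `R[X]`. -/
noncomputable def mvTaylor :
    MvPolynomial σ R →+* MvPolynomial σ (MvPolynomial σ R) :=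
  eval₂Hom (C.comp C) fun k => C (X k) + X k

theorem eval₂_add_eq_eval₂_mvTaylor {A : Type*} [CommSemiring A] (f : R →+* A) (x y : σ → A)
    (P : MvPolynomial σ R) :
    eval₂ f (x + y) P = eval₂ (eval₂Hom f x) y (mvTaylor P) := by
  change eval₂Hom f (x + y) P = (eval₂Hom (eval₂Hom f x) y).comp mvTaylor P
  congr 1
  ext <;> simp [mvTaylor]

theorem mvTaylor_X_pow (k : σ) (n : ℕ) :
    mvTaylor (X k ^ n : MvPolynomial σ R) = ∑ j ∈ range (n + 1),
      monomial (Finsupp.single k j) (monomial (Finsupp.single k (n - j)) (n.choose j : R)) := by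
  rw [map_pow, mvTaylor, eval₂Hom_X', add_comm, add_pow]
  refine sum_congr rfl fun j _ => ?_
  rw [X_pow_eq_monomial, ← map_pow, X_pow_eq_monomial, ← map_natCast C, ← map_natCast C,
    mul_assoc, ← C_mul, mul_comm, mul_comm _ (C _), C_mul_monomial, C_mul_monomial, mul_one,
    mul_one]

theorem mvTaylor_monomial [Fintype σ] [DecidableEq σ] (e : σ →₀ ℕ) (c : R) :
    mvTaylor (monomial e c) = ∑ f ∈ Fintype.piFinset fun k => range (e k + 1),
      monomial (Finsupp.equivFunOnFinite.symm f)
        (monomial (e - Finsupp.equivFunOnFinite.symm f) ((∏ k, (e k).choose (f k) : ℕ) * c)) := by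
  rw [monomial_eq, map_mul, Finsupp.prod_fintype _ _ fun _ => pow_zero _, map_prod]
  simp_rw [mvTaylor_X_pow]
  rw [prod_univ_sum, mul_sum]
  refine sum_congr rfl fun f _ => ?_
  have hsub : ∑ k, Finsupp.single k (e k - f k) = e - Finsupp.equivFunOnFinite.symm f := by
    ext k
    rw [Finsupp.finsetSum_apply,
      sum_eq_single_of_mem k (mem_univ k) fun i _ hik => by simp [hik]]
    simp
  rw [← monomial_sum_prod, ← monomial_sum_prod, Nat.cast_prod,
    ← Finsupp.equivFunOnFinite_symm_eq_sum, mvTaylor, eval₂Hom_C, RingHom.comp_apply,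
    C_mul_monomial, C_mul_monomial, hsub, mul_comm c]

theorem taylor_aeval_eq_eval₂_mvTaylor {γ : σ → Polynomial R} {t : R}
    (hγ : ∀ k, Polynomial.taylor t (γ k) = Polynomial.C ((γ k).eval t) + γ k)
    (P : MvPolynomial σ R) :
    Polynomial.taylor t (aeval γ P)
      = eval₂ (Polynomial.C.comp (eval fun k => (γ k).eval t)) γ (mvTaylor P) := by
  change ((Polynomial.taylorAlgHom t).comp (aeval γ)) P = _
  simp only [comp_aeval, Polynomial.taylorAlgHom_apply, hγ, aeval_def]
  rw [← Pi.add_def (fun k => Polynomial.C _), eval₂_add_eq_eval₂_mvTaylor]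
  congr 1
  ext <;> simp

theorem eval₂_sub_eval₂_dvd {A : Type*} [CommRing A] (ψ : R →+* A) {c : A} {x y : σ → A}
    (h : ∀ k, c ∣ x k - y k) (D : MvPolynomial σ R) :
    c ∣ eval₂ ψ x D - eval₂ ψ y D := by
  induction D using MvPolynomial.induction_on with
  | C r => simp
  | add p p' hp hp' =>
    rw [eval₂_add, eval₂_add, add_sub_add_comm]
    exact dvd_add hp hp'
  | mul_X p k hp =>
    rw [eval₂_mul, eval₂_mul, eval₂_X, eval₂_X,
      show eval₂ ψ x p * x k - eval₂ ψ y p * y k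
        = (eval₂ ψ x p - eval₂ ψ y p) * x k + eval₂ ψ y p * (x k - y k) by ring]
    exact dvd_add (dvd_mul_of_dvd_left hp _) (dvd_mul_of_dvd_right (h k) _)

theorem coeff_eval₂_C_mul_X {K : Type*} [CommSemiring K] {m : ℕ} (g : R →+* K) (c : Fin m → K)
    (D : MvPolynomial (Fin m) R) (j : ℕ) :
    (D.eval₂ (Polynomial.C.comp g) fun k => Polynomial.C (c k) * Polynomial.X).coeff j
      = ∑ i ∈ Nat.antidiagonalTuple m j,
          g (D.coeff (Finsupp.equivFunOnFinite.symm i)) * ∏ k, c k ^ i k := by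
  induction D using MvPolynomial.induction_on' with
  | monomial d r =>
    have hprod : (d.prod fun k e => (Polynomial.C (c k) * Polynomial.X) ^ e)
        = Polynomial.C (∏ k, c k ^ d k) * Polynomial.X ^ ∑ k, d k := by
      rw [Finsupp.prod_fintype _ _ fun _ => pow_zero _]
      simp only [mul_pow, prod_mul_distrib, prod_pow_eq_pow_sum, map_prod, map_pow]
    have hd : ∀ i : Fin m → ℕ, d = Finsupp.equivFunOnFinite.symm i ↔ i = ⇑d := by
      intro i
      rw [Equiv.eq_symm_apply, eq_comm]
      rfl
    rw [eval₂_monomial, hprod, RingHom.comp_apply, ← mul_assoc, ← Polynomial.C_mul,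
      Polynomial.coeff_C_mul_X_pow]
    simp only [coeff_monomial, hd, apply_ite g, map_zero, ite_mul, zero_mul, sum_ite_eq',
      Nat.mem_antidiagonalTuple, eq_comm (a := j)]
  | add p p' hp hp' =>
    simp only [eval₂_add, Polynomial.coeff_add, hp, hp', coeff_add, map_add, add_mul,
      sum_add_distrib]

end MvPolynomial

section HasseDeriv

open MvPolynomial Finset

variable {R : Type*} [CommSemiring R] {m : ℕ}

theorem mvHasseDeriv_eq_coeff_mvTaylor (i : Fin m → ℕ) (P : MvPolynomial (Fin m) R) :
    mvHasseDeriv i P = (mvTaylor P).coeff (Finsupp.equivFunOnFinite.symm i) := rfl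

theorem mvHasseDeriv_monomial (i : Fin m → ℕ) (e : Fin m →₀ ℕ) (c : R) :
    mvHasseDeriv i (monomial e c)
      = monomial (e - Finsupp.equivFunOnFinite.symm i) ((∏ k, (e k).choose (i k) : ℕ) * c) := by
  simp only [mvHasseDeriv_eq_coeff_mvTaylor, mvTaylor_monomial, coeff_sum, coeff_monomial,
    EmbeddingLike.apply_eq_iff_eq, sum_ite_eq', Fintype.mem_piFinset, mem_range, Nat.lt_succ_iff]
  split_ifs with hi
  · rfl
  · obtain ⟨k, hk⟩ := not_forall.mp hi
    rw [prod_eq_zero (mem_univ k) (Nat.choose_eq_zero_of_lt (not_le.mp hk)), Nat.cast_zero,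
      zero_mul, monomial_zero]

theorem coeff_mvHasseDeriv (i : Fin m → ℕ) (P : MvPolynomial (Fin m) R) (d : Fin m →₀ ℕ) :
    (mvHasseDeriv i P).coeff d
      = (∏ k, (d k + i k).choose (i k) : ℕ) * P.coeff (d + Finsupp.equivFunOnFinite.symm i) := by
  induction P using MvPolynomial.induction_on' with
  | monomial e c =>
    rw [mvHasseDeriv_monomial, coeff_monomial, coeff_monomial]
    by_cases he : e = d + Finsupp.equivFunOnFinite.symm i
    · subst he
      simp
    · rw [if_neg he, mul_zero, ite_eq_right_iff]
      intro hd
      obtain ⟨k, hk⟩ : ∃ k, e k < i k := by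
        by_contra! hle
        exact he (by rw [← hd, tsub_add_cancel_of_le fun k => hle k])
      rw [prod_eq_zero (mem_univ k) (Nat.choose_eq_zero_of_lt hk), Nat.cast_zero, zero_mul]
  | add p p' hp hp' =>
    rw [mvHasseDeriv_eq_coeff_mvTaylor] at *
    rw [map_add, coeff_add, coeff_add, hp, hp', coeff_add, mul_add]

theorem mvHasseDeriv_mvHasseDeriv (i l : Fin m → ℕ) (P : MvPolynomial (Fin m) R) :
    mvHasseDeriv i (mvHasseDeriv l P)
      = (∏ k, (i k + l k).choose (l k)) • mvHasseDeriv (i + l) P := by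
  ext d
  have hidx : d + Finsupp.equivFunOnFinite.symm i + Finsupp.equivFunOnFinite.symm l
      = d + Finsupp.equivFunOnFinite.symm (i + l) := by
    ext k
    simp [add_assoc]
  have hchoose : ∀ k, (d k + i k).choose (i k) * (d k + i k + l k).choose (l k)
      = (i k + l k).choose (l k) * (d k + (i k + l k)).choose (i k + l k) := by
    intro k
    have h := Nat.choose_mul (n := d k + i k + l k) (Nat.le_add_left (l k) (i k))
    rw [Nat.add_sub_cancel, Nat.add_sub_cancel] at h
    rw [← add_assoc, mul_comm ((i k + l k).choose _), h, mul_comm]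
  rw [coeff_smul, coeff_mvHasseDeriv, coeff_mvHasseDeriv, coeff_mvHasseDeriv, nsmul_eq_mul,
    ← mul_assoc, ← mul_assoc, ← Nat.cast_mul, ← Nat.cast_mul, ← prod_mul_distrib,
    ← prod_mul_distrib, hidx]
  simp [hchoose]

end HasseDeriv

theorem hasseDeriv_restriction_to_trace_curve_general {F K : Type*} [Field F] [Fintype F]
    [Field K] [Algebra F K] {m : ℕ}
    (a : Fin m → K)
    (γ : Fin m → Polynomial K)
    (hγ : ∀ k, γ k = ∑ e ∈ Finset.range m,
      Polynomial.C (a k ^ Fintype.card F ^ e) * Polynomial.X ^ Fintype.card F ^ e)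
    (P : MvPolynomial (Fin m) F) (l : Fin m → ℕ)
    (Q : Polynomial K)
    (hQ : Q = MvPolynomial.aeval γ
      (mvHasseDeriv l (MvPolynomial.map (algebraMap F K) P)))
    (t : K) (j : ℕ) (hj : j < Fintype.card F) :
    (Polynomial.hasseDeriv j Q).eval t =
      ∑ i ∈ Finset.Nat.antidiagonalTuple m j,
        ((∏ k, (i k + l k).choose (l k) : ℕ) : K) *
          MvPolynomial.eval (fun k => (γ k).eval t)
            (mvHasseDeriv (i + l) (MvPolynomial.map (algebraMap F K) P)) *
          ∏ k, a k ^ i k := by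
  obtain rfl : γ = fun k => traceCurve (Fintype.card F) m (a k) := funext hγ
  subst hQ
  have hcurve : ∀ k, Polynomial.X ^ Fintype.card F ∣
      traceCurve (Fintype.card F) m (a k) - Polynomial.C (a k) * Polynomial.X :=
    fun k => X_pow_dvd_traceCurve_sub _ k.pos (a k)
  rw [← Polynomial.taylor_coeff,
    MvPolynomial.taylor_aeval_eq_eval₂_mvTaylor fun k => taylor_traceCurve m (a k) t,
    Polynomial.coeff_eq_of_X_pow_dvd_sub (MvPolynomial.eval₂_sub_eval₂_dvd _ hcurve _) hj,
    MvPolynomial.coeff_eval₂_C_mul_X]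
  refine Finset.sum_congr rfl fun i _ => ?_
  rw [← mvHasseDeriv_eq_coeff_mvTaylor, mvHasseDeriv_mvHasseDeriv,
    map_nsmul, nsmul_eq_mul]

/-- **Derivatives of the restriction of a derivative to a trace curve.**
Let `F = F_q ⊆ K = F_{q^m}`, let `a_1, …, a_m ∈ K` be a basis of `K` over `F`, and let
`γ_k(T) = ∑_{e<m} a_k^{q^e} T^{q^e}` (so `γ_k(t) = Tr(a_k·t)`). For `P ∈ F[X_1,…,X_m]` and
`Q_l(T) = P^{(l)}(γ_1(T), …, γ_m(T))`, every `t ∈ K` and every `j < q` satisfy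
`Q_l^{(j)}(t) = ∑_{i : wt(i) = j} binom(i+l, l) · P^{(i+l)}(γ(t)) · a^i`. -/
theorem hasseDeriv_restriction_to_trace_curve {F K : Type*} [Field F] [Fintype F]
    [Field K] [Fintype K] [Algebra F K] {m : ℕ}
    (a : Fin m → K) (ha : LinearIndependent F a)
    (ha' : Submodule.span F (Set.range a) = ⊤)
    (γ : Fin m → Polynomial K)
    (hγ : ∀ k, γ k = ∑ e ∈ Finset.range m,
      Polynomial.C (a k ^ Fintype.card F ^ e) * Polynomial.X ^ Fintype.card F ^ e)
    (P : MvPolynomial (Fin m) F) (l : Fin m → ℕ)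
    (Q : Polynomial K)
    (hQ : Q = MvPolynomial.aeval γ
      (mvHasseDeriv l (MvPolynomial.map (algebraMap F K) P)))
    (t : K) (j : ℕ) (hj : j < Fintype.card F) :
    (Polynomial.hasseDeriv j Q).eval t =
      ∑ i ∈ Finset.Nat.antidiagonalTuple m j,
        ((∏ k, (i k + l k).choose (l k) : ℕ) : K) *
          MvPolynomial.eval (fun k => (γ k).eval t)
            (mvHasseDeriv (i + l) (MvPolynomial.map (algebraMap F K) P)) *
          ∏ k, a k ^ i k :=
  hasseDeriv_restriction_to_trace_curve_general a γ hγ P l Q hQ t j hj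
end
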